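/- arXiv:2605.29906 — 2 statements merged into one kernel-verified Lean document; each statement's English description precedes it below -/
import Mathlib

section
/- Let $z_1, \dots, z_T$ be a finite sequence in $\mathbb{R}^d$ with total variation $V = \sum_{t=1}^{T-1} \|z_{t+1} - z_t\|_2$. For any integer $m \ge 2$, there exists a piecewise-constant sequence $\tilde z_1, \dots, \tilde z_T$ taking at most $m$ distinct values on contiguous segments (each $\tilde z_t$ equals the first element $z_a$ of the segment containing $t$) such that $\max_{1 \le t \le T} \|z_t - \tilde z_t\|_2 \le \frac{V}{m-1}$. -/
open Finset
open scoped Classical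

/-- Greedy segment boundaries: `pcaB T z ε 0 = 1`, and each next boundary is the first
index within `[1,T]` where the error from the current segment start exceeds `ε`,
or `T+1` if there is none. -/
noncomputable def pcaB {d : ℕ} (T : ℕ) (z : ℕ → EuclideanSpace ℝ (Fin d)) (ε : ℝ) : ℕ → ℕ
  | 0 => 1
  | i + 1 =>
    if h : ∃ t, pcaB T z ε i < t ∧ t ≤ T ∧ ε < ‖z t - z (pcaB T z ε i)‖ then Nat.find h
    else T + 1

theorem piecewise_constant_approximation
    {d : ℕ} (T : ℕ) (hT : 1 ≤ T)
    (z : ℕ → EuclideanSpace ℝ (Fin d)) (V : ℝ)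
    (hV : V = ∑ t ∈ Finset.Icc 1 (T - 1), ‖z (t + 1) - z t‖)
    (m : ℕ) (hm : 2 ≤ m) :
    ∃ (k : ℕ) (b : ℕ → ℕ) (ztil : ℕ → EuclideanSpace ℝ (Fin d)),
      k ≤ m ∧
      b 0 = 1 ∧
      (∀ i < k, b i < b (i + 1)) ∧
      b k = T + 1 ∧
      (∀ i < k, ∀ t, b i ≤ t → t < b (i + 1) → ztil t = z (b i)) ∧
      (∀ t, 1 ≤ t → t ≤ T → ‖z t - ztil t‖ ≤ V / ((m : ℝ) - 1)) := by
  set ε : ℝ := V / ((m : ℝ) - 1) with hε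
  set S : ℕ → ℝ := fun t => ∑ s ∈ Finset.Icc 1 (t - 1), ‖z (s + 1) - z s‖ with hS
  set b : ℕ → ℕ := pcaB T z ε with hbdef
  have hm1 : (0:ℝ) < (m:ℝ) - 1 := by
    have : (2:ℝ) ≤ (m:ℝ) := by exact_mod_cast hm
    linarith
  have hV0 : 0 ≤ V := by
    rw [hV]; exact Finset.sum_nonneg fun _ _ => norm_nonneg _
  have hε0 : 0 ≤ ε := div_nonneg hV0 hm1.le
  have hVε : V = ((m:ℝ) - 1) * ε := by
    rw [hε]; field_simp
  have hb0 : b 0 = 1 := rfl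
  have hbsucc : ∀ i, b (i + 1) =
      if h : ∃ t, b i < t ∧ t ≤ T ∧ ε < ‖z t - z (b i)‖ then Nat.find h else T + 1 :=
    fun i => rfl
  have hSmono : ∀ a t : ℕ, a ≤ t → S a ≤ S t := by
    intro a t h
    apply Finset.sum_le_sum_of_subset_of_nonneg
    · exact Finset.Icc_subset_Icc_right (Nat.sub_le_sub_right h 1)
    · intros; positivity
  have hST : S T = V := by rw [hV]
  have hS1 : S 1 = 0 := by simp [hS]
  have hSstep : ∀ t, 1 ≤ t → S (t + 1) = S t + ‖z (t + 1) - z t‖ := by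
    intro t ht
    have h1 : t - 1 + 1 = t := Nat.succ_pred_eq_of_pos ht
    calc S (t + 1) = ∑ s ∈ Icc 1 (t - 1 + 1), ‖z (s + 1) - z s‖ := by
          simp only [hS]; rw [h1]; norm_num
      _ = (∑ s ∈ Icc 1 (t - 1), ‖z (s + 1) - z s‖) + ‖z (t - 1 + 1 + 1) - z (t - 1 + 1)‖ :=
          Finset.sum_Icc_succ_top (by omega) _
      _ = S t + ‖z (t + 1) - z t‖ := by rw [h1]
  have hkey : ∀ a t : ℕ, 1 ≤ a → a ≤ t → ‖z t - z a‖ ≤ S t - S a := by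
    intro a t ha hat
    induction t, hat using Nat.le_induction with
    | base => simp
    | succ t ht ih =>
      have h2 := hSstep t (le_trans ha ht)
      calc ‖z (t + 1) - z a‖ ≤ ‖z (t + 1) - z t‖ + ‖z t - z a‖ :=
            norm_sub_le_norm_sub_add_norm_sub _ _ _
        _ ≤ ‖z (t + 1) - z t‖ + (S t - S a) := by linarith [ih]
        _ = S (t + 1) - S a := by rw [h2]; ring
  have hble : ∀ i, 1 ≤ b i ∧ b i ≤ T + 1 := by
    intro i
    induction i with
    | zero => exact ⟨le_refl 1, by omega⟩
    | succ i ih =>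
      rw [hbsucc i]
      split_ifs with h
      · obtain ⟨h1, h2, _⟩ := Nat.find_spec h
        omega
      · omega
  have hstab : ∀ i, b i = T + 1 → b (i + 1) = T + 1 := by
    intro i hi
    rw [hbsucc i, dif_neg]
    rintro ⟨t, h1, h2, _⟩
    omega
  have hlt : ∀ i, b i ≤ T → b i < b (i + 1) := by
    intro i hi
    rw [hbsucc i]
    split_ifs with h
    · exact (Nat.find_spec h).1
    · omega
  have hgrow : ∀ i, b i = T + 1 ∨ i + 1 ≤ b i := by
    intro i
    induction i with
    | zero => right; exact le_refl 1
    | succ i ih =>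
      rcases ih with h | h
      · left; exact hstab i h
      · by_cases hbi : b i ≤ T
        · right; have := hlt i hbi; omega
        · left; exact hstab i (by have := (hble i).2; omega)
  have hbT : b T = T + 1 := by
    rcases hgrow T with h | h
    · exact h
    · have := (hble T).2; omega
  have hex : ∃ i, b i = T + 1 := ⟨T, hbT⟩
  set k : ℕ := Nat.find hex with hkdef
  have hbk : b k = T + 1 := Nat.find_spec hex
  have hik : ∀ i < k, b i ≠ T + 1 := fun i hi => Nat.find_min hex hi
  have hikT : ∀ i < k, b i ≤ T := by
    intro i hi
    have h1 := (hble i).2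
    have h2 := hik i hi
    omega
  have hinc : ∀ i < k, b i < b (i + 1) := fun i hi => hlt i (hikT i hi)
  have hmono : ∀ i j, i ≤ j → j ≤ k → b i ≤ b j := by
    intro i j hij hjk
    induction j, hij using Nat.le_induction with
    | base => exact le_refl _
    | succ j hij ih =>
      exact le_trans (ih (by omega)) (hinc j (by omega)).le
  have hseg : ∀ i < k, ∀ t, b i ≤ t → t < b (i + 1) → ‖z t - z (b i)‖ ≤ ε := by
    intro i hi t h1 h2
    rcases eq_or_lt_of_le h1 with heq | h1'
    · rw [← heq]; simpa using hε0
    · have ht : t ≤ T := by have := (hble (i + 1)).2; omega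
      by_contra hc
      push_neg at hc
      have hcond : ∃ t', b i < t' ∧ t' ≤ T ∧ ε < ‖z t' - z (b i)‖ := ⟨t, h1', ht, hc⟩
      rw [hbsucc i, dif_pos hcond] at h2
      exact Nat.find_min hcond h2 ⟨h1', ht, hc⟩
  have hlow : ∀ j < k, (j : ℝ) * ε ≤ S (b j) := by
    intro j hj
    induction j with
    | zero => simp [hb0, hS1]
    | succ j ih =>
      have hj' : j < k := by omega
      have ihj := ih hj'
      have hbj1 : b (j + 1) ≠ T + 1 := hik _ hj
      have hcond : ∃ t, b j < t ∧ t ≤ T ∧ ε < ‖z t - z (b j)‖ := by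
        by_contra h
        rw [hbsucc j, dif_neg h] at hbj1
        exact hbj1 rfl
      have heq : b (j + 1) = Nat.find hcond := by rw [hbsucc j, dif_pos hcond]
      obtain ⟨hlt1, hle1, hgt1⟩ := Nat.find_spec hcond
      rw [← heq] at hlt1 hle1 hgt1
      have hk1 := hkey (b j) (b (j + 1)) (hble j).1 hlt1.le
      have : ε ≤ S (b (j + 1)) - S (b j) := le_trans hgt1.le hk1
      push_cast
      linarith
  have hkm : k ≤ m := by
    by_cases hεpos : 0 < ε
    · have hk1 : 1 ≤ k := by
        rcases Nat.eq_zero_or_pos k with h | h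
        · exfalso
          have := hbk
          rw [h, hb0] at this
          omega
        · exact h
      have h1 : ((k - 1 : ℕ) : ℝ) * ε ≤ S (b (k - 1)) := hlow (k - 1) (by omega)
      have h2 : S (b (k - 1)) ≤ S T := hSmono _ _ (hikT (k - 1) (by omega))
      rw [hST] at h2
      have h3 : ((k - 1 : ℕ) : ℝ) * ε ≤ ((m : ℝ) - 1) * ε := by
        rw [← hVε]; linarith
      have h4 : ((k - 1 : ℕ) : ℝ) ≤ (m : ℝ) - 1 := le_of_mul_le_mul_right h3 hεpos
      have h5 : ((k - 1 : ℕ) : ℝ) ≤ ((m - 1 : ℕ) : ℝ) := by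
        have : ((m - 1 : ℕ) : ℝ) = (m : ℝ) - 1 := by
          have : (1:ℕ) ≤ m := by omega
          push_cast [this]; ring
        rw [this]; exact h4
      have h6 : k - 1 ≤ m - 1 := by exact_mod_cast h5
      omega
    · have hεz : ε = 0 := le_antisymm (not_lt.mp hεpos) hε0
      have hVz : V = 0 := by rw [hVε, hεz, mul_zero]
      have hb1 : b 1 = T + 1 := by
        rw [hbsucc 0, dif_neg]
        rintro ⟨t, h1, h2, h3⟩
        have hk1 := hkey (b 0) t (hble 0).1 h1.le
        have h4 : S t ≤ S T := hSmono _ _ h2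
        rw [hST, hVz] at h4
        have h5 : S (b 0) = 0 := by rw [hb0, hS1]
        rw [hεz] at h3
        have := norm_nonneg (z t - z (b 0))
        linarith
      have : k ≤ 1 := Nat.find_min' hex hb1
      omega
  refine ⟨k, b, fun t => z (b (Nat.findGreatest (fun i => b i ≤ t) k)), hkm, hb0, hinc, hbk,
    ?_, ?_⟩
  · intro i hi t h1 h2
    have hfg : Nat.findGreatest (fun j => b j ≤ t) k = i := by
      rw [Nat.findGreatest_eq_iff]
      refine ⟨hi.le, fun _ => h1, fun n hn1 hn2 => ?_⟩
      have hbn : b (i + 1) ≤ b n := hmono (i + 1) n hn1 hn2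
      show ¬ b n ≤ t
      omega
    simp only [hfg]
  · intro t ht1 ht2
    set i := Nat.findGreatest (fun j => b j ≤ t) k with hidef
    have hPi : b i ≤ t := by
      have h0 : b 0 ≤ t := by rw [hb0]; exact ht1
      exact Nat.findGreatest_spec (P := fun j => b j ≤ t) (Nat.zero_le k) h0
    have hiltk : i < k := by
      have hle : i ≤ k := Nat.findGreatest_le k
      rcases eq_or_lt_of_le hle with heq | h
      · exfalso
        rw [heq] at hPi
        rw [hbk] at hPi
        omega
      · exact h
    have hnext : t < b (i + 1) := by
      have hng := Nat.findGreatest_is_greatest (P := fun j => b j ≤ t)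
        (show i < i + 1 by omega) (show i + 1 ≤ k from hiltk)
      have hng' : ¬ b (i + 1) ≤ t := hng
      omega
    exact hseg i hiltk t hPi hnext
end

section
/- Combined compression-rollout theorem: Let $z_{1:T}$ be a latent trajectory in $\mathbb{R}^d$ with total variation $V$, and let $F$ be closed-loop dynamics satisfying $\|F(s,z)-F(s',z')\| \le L_s\|s-s'\| + L_z\|z-z'\|$ with $L_s < 1$. Then for any $m \ge 2$ there exists a piecewise-constant latent sequence $\tilde z_{1:T}$ with at most $m$ segments such that the rollouts from a common initial state satisfy $\|\tilde s_t - s_t\| \le \frac{L_z V}{(m-1)(1 - L_s)}$ for all $t$. -/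
/-!
Cut the latent trajectory greedily: a segment starting at `a` is extended as long as the
variation of `z` accumulated since `a` stays at most `ε = V / (m - 1)`. Every segment but the
last consumes more than `ε` of the total variation `V`, so there are at most `m` segments, and on
each of them the frozen value `z a` is within `ε` of `z t`. The Lipschitz bound then gives
`‖s̃ₜ₊₁ - sₜ₊₁‖ ≤ L_s ‖s̃ₜ - sₜ‖ + L_z ε`, whose fixed point `L_z ε / (1 - L_s)` bounds the error
for all `t`.
-/

open Finset

section Partition

variable {α : Type*} [PseudoMetricSpace α]

theorem exists_segment_end (z : ℕ → α) {ε : ℝ} (hε : 0 ≤ ε) {a T : ℕ} (haT : a ≤ T) :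
    ∃ a', a < a' ∧ a' ≤ T + 1 ∧ (∀ t, a ≤ t → t < a' → dist (z a) (z t) ≤ ε) ∧
      (a' ≤ T → ε < ∑ u ∈ Ico a a', dist (z u) (z (u + 1))) := by
  classical
  set c : ℕ → ℝ := fun t => ∑ u ∈ range t, dist (z u) (z (u + 1))
  have hc : Monotone c := monotone_nat_of_le_succ fun t => by simp [c, sum_range_succ]
  have hvar : ∀ s t, s ≤ t → ∑ u ∈ Ico s t, dist (z u) (z (u + 1)) = c t - c s :=
    fun s t h => sum_Ico_eq_sub _ h
  have hfar : ∃ t, T < t ∨ c a + ε < c t := ⟨T + 1, .inl T.lt_succ_self⟩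
  have hnear : ∀ t < Nat.find hfar, t ≤ T ∧ c t ≤ c a + ε := fun t ht => by
    simpa using Nat.find_min hfar ht
  have haa' : a < Nat.find hfar := by
    by_contra! h
    rcases Nat.find_spec hfar with h' | h'
    · omega
    · linarith [hc h]
  refine ⟨Nat.find hfar, haa', Nat.find_le (.inl T.lt_succ_self), fun t hat ht => ?_,
    fun ha'T => ?_⟩
  · have := dist_le_Ico_sum_dist z hat
    rw [hvar a t hat] at this
    linarith [(hnear t ht).2]
  · rw [hvar a _ haa'.le]
    linarith [(Nat.find_spec hfar).resolve_left (by omega)]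

theorem exists_piecewiseConst_dist_le (z : ℕ → α) {ε : ℝ} (hε : 0 ≤ ε) {a T : ℕ} (haT : a ≤ T)
    (N : ℕ) (hN : ∑ u ∈ Ico a T, dist (z u) (z (u + 1)) ≤ N * ε) :
    ∃ (k : ℕ) (b : ℕ → ℕ) (ztil : ℕ → α), k ≤ N + 1 ∧ b 0 = a ∧ (∀ i < k, b i < b (i + 1)) ∧
      b k = T + 1 ∧ (∀ i < k, ∀ t, b i ≤ t → t < b (i + 1) → ztil t = z (b i)) ∧
      ∀ t, a ≤ t → t ≤ T → dist (ztil t) (z t) ≤ ε := by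
  obtain ⟨a', haa', ha'T1, hclose, hjump⟩ := exists_segment_end z hε haT
  by_cases ha'T : a' ≤ T
  · have hsplit := sum_Ico_consecutive (fun u => dist (z u) (z (u + 1))) haa'.le ha'T
    have hrest : 0 ≤ ∑ u ∈ Ico a' T, dist (z u) (z (u + 1)) := sum_nonneg fun _ _ => dist_nonneg
    obtain ⟨N, rfl⟩ : ∃ N', N = N' + 1 := Nat.exists_eq_succ_of_ne_zero <| by
      rintro rfl
      rw [Nat.cast_zero, zero_mul] at hN
      linarith [hjump ha'T]
    obtain ⟨k, b, ztil, hk, hb0, hb, hbk, hseg, hdist⟩ :=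
      exists_piecewiseConst_dist_le z hε ha'T N <| by
        push_cast at hN
        linarith [hjump ha'T]
    have hab : ∀ i ≤ k, a' ≤ b i := fun i hi =>
      hb0 ▸ (strictMonoOn_Iic_of_lt_succ hb).monotoneOn (by simp) hi (Nat.zero_le i)
    refine ⟨k + 1, fun | 0 => a | i + 1 => b i, fun t => if t < a' then z a else ztil t,
      by omega, rfl, ?_, hbk, ?_, ?_⟩
    · rintro (_ | i) hi <;> dsimp only
      · exact hb0 ▸ haa'
      · exact hb i (by omega)
    · rintro (_ | i) hi t hit hti <;> dsimp only at hit hti ⊢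
      · simp [show t < a' from hb0 ▸ hti]
      · simp [show ¬ t < a' by have := hab i (by omega); omega, hseg i (by omega) t hit hti]
    · intro t hat htT
      by_cases hta' : t < a'
      · simpa [hta'] using hclose t hat hta'
      · simpa [hta'] using hdist t (by omega) htT
  · refine ⟨1, fun | 0 => a | _ + 1 => T + 1, fun _ => z a, by omega, rfl, ?_, rfl, ?_, ?_⟩
    · intro i hi; obtain rfl : i = 0 := by omega
      exact Nat.lt_succ_of_le haT
    · intro i hi; obtain rfl : i = 0 := by omega
      intro t _ _; rfl
    · exact fun t hat htT => hclose t hat (by omega)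
termination_by T - a

end Partition

section Rollout

variable {S Z : Type*} [PseudoMetricSpace S] [PseudoMetricSpace Z]

theorem dist_rollout_le (F : S → Z → S) {Ls Lz B δ : ℝ} (hLs : 0 ≤ Ls) (hLz : 0 ≤ Lz)
    (hLip : ∀ s s' zc zc', dist (F s zc) (F s' zc') ≤ Ls * dist s s' + Lz * dist zc zc')
    (hB : Ls * B + Lz * δ ≤ B) {T : ℕ} {z ztil : ℕ → Z}
    (hz : ∀ t, 1 ≤ t → t < T → dist (ztil t) (z t) ≤ δ) {s stil : ℕ → S}
    (h1 : dist (stil 1) (s 1) ≤ B) (hs : ∀ t, 1 ≤ t → s (t + 1) = F (s t) (z t))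
    (hstil : ∀ t, 1 ≤ t → stil (t + 1) = F (stil t) (ztil t)) :
    ∀ t, 1 ≤ t → t ≤ T → dist (stil t) (s t) ≤ B := by
  intro t ht
  induction t, ht using Nat.le_induction with
  | base => exact fun _ => h1
  | succ t ht ih =>
    intro htT
    rw [hs t ht, hstil t ht]
    calc dist (F (stil t) (ztil t)) (F (s t) (z t))
        ≤ Ls * dist (stil t) (s t) + Lz * dist (ztil t) (z t) := hLip _ _ _ _
      _ ≤ Ls * B + Lz * δ := by gcongr <;> [exact ih (by omega); exact hz t ht (by omega)]
      _ ≤ B := hB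

end Rollout

theorem compression_rollout_bound
    {n d : ℕ} (T : ℕ) (hT : 1 ≤ T)
    (z : ℕ → EuclideanSpace ℝ (Fin d)) (V : ℝ)
    (hV : V = ∑ t ∈ Finset.Icc 1 (T - 1), ‖z (t + 1) - z t‖)
    (F : EuclideanSpace ℝ (Fin n) → EuclideanSpace ℝ (Fin d) → EuclideanSpace ℝ (Fin n))
    (Ls Lz : ℝ) (hLs0 : 0 ≤ Ls) (hLs1 : Ls < 1) (hLz : 0 ≤ Lz)
    (hLip : ∀ s s' : EuclideanSpace ℝ (Fin n), ∀ zc zc' : EuclideanSpace ℝ (Fin d),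
      ‖F s zc - F s' zc'‖ ≤ Ls * ‖s - s'‖ + Lz * ‖zc - zc'‖)
    (m : ℕ) (hm : 2 ≤ m) :
    ∃ (k : ℕ) (b : ℕ → ℕ) (ztil : ℕ → EuclideanSpace ℝ (Fin d)),
      k ≤ m ∧
      b 0 = 1 ∧
      (∀ i < k, b i < b (i + 1)) ∧
      b k = T + 1 ∧
      (∀ i < k, ∀ t, b i ≤ t → t < b (i + 1) → ztil t = z (b i)) ∧
      (∀ s stil : ℕ → EuclideanSpace ℝ (Fin n),
        s 1 = stil 1 →
        (∀ t, 1 ≤ t → s (t + 1) = F (s t) (z t)) →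
        (∀ t, 1 ≤ t → stil (t + 1) = F (stil t) (ztil t)) →
        ∀ t, 1 ≤ t → t ≤ T →
          ‖stil t - s t‖ ≤ Lz * V / (((m : ℝ) - 1) * (1 - Ls))) := by
  have hm1 : (0 : ℝ) < m - 1 := by
    have : (2 : ℝ) ≤ m := by exact_mod_cast hm
    linarith
  have hVsum : V = ∑ u ∈ Ico 1 T, dist (z u) (z (u + 1)) := by
    rw [hV, show Icc 1 (T - 1) = Ico 1 T by ext u; simp only [mem_Icc, mem_Ico]; omega]
    exact sum_congr rfl fun u _ => by rw [dist_comm, dist_eq_norm]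
  set ε := V / (m - 1)
  have hε : 0 ≤ ε := div_nonneg (hVsum ▸ sum_nonneg fun _ _ => dist_nonneg) hm1.le
  have hVε : V ≤ ((m - 1 : ℕ) : ℝ) * ε := by
    rw [Nat.cast_sub (by omega), Nat.cast_one, mul_div_cancel₀ V hm1.ne']
  obtain ⟨k, b, ztil, hk, hb0, hb, hbk, hseg, hdist⟩ :=
    exists_piecewiseConst_dist_le z hε hT (m - 1) (hVsum ▸ hVε)
  refine ⟨k, b, ztil, by omega, hb0, hb, hbk, hseg, fun s stil h1 hs hstil t ht htT => ?_⟩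
  have hLs : 0 < 1 - Ls := by linarith
  rw [← dist_eq_norm,
    show Lz * V / ((m - 1) * (1 - Ls)) = Lz * ε / (1 - Ls) by simp only [ε]; field_simp]
  refine dist_rollout_le F hLs0 hLz (by simpa only [dist_eq_norm] using hLip)
    (le_of_eq (by field_simp; ring)) (fun t ht _ => hdist t ht (by omega))
    (by rw [h1, dist_self]; exact div_nonneg (mul_nonneg hLz hε) hLs.le) hs hstil t ht htT
end
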